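/- Let D ≥ 2 and let (c_j)_{j≥1} be the nondecreasing enumeration (with multiplicity) of the multiset { ∏_{k=1}^D 𝐣^k : 𝐣 ∈ (ℕ⁺)^D }; equivalently c_j = min{ m ∈ ℕ⁺ : T_D(m) ≥ j }, so each positive integer m occurs exactly τ_D(m) times in the sequence. Then c_j = Θ( j·log^{−(D−1)} j ) as j → ∞; that is, there exist constants C₁, C₂ > 0 depending only on D such that for all j ≥ 2, C₁ · j / log^{D−1} j ≤ c_j ≤ C₂ · j / log^{D−1} j. -/

import Mathlib

/-- The `D`-fold divisor function: the number of ordered `D`-tuples of positive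
integers whose product is `n`. -/
noncomputable def tauD (D n : ℕ) : ℕ :=
  Nat.card {f : Fin D → ℕ+ // (∏ k, ((f k : ℕ))) = n}

/-- `T_D(x) = Σ_{n ≤ x} τ_D(n)`, the sum over positive integers `n ≤ x`. -/
noncomputable def TD (D : ℕ) (x : ℝ) : ℕ :=
  ∑ n ∈ Finset.Icc 1 ⌊x⌋₊, tauD D n

/-- The `j`-th element (for `j ≥ 1`) of the nondecreasing enumeration (with multiplicity)
of the multiset `{ ∏_k 𝐣^k : 𝐣 ∈ (ℕ⁺)^D }`, characterized as
`c_j = min { m ∈ ℕ⁺ : T_D(m) ≥ j }`. -/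
noncomputable def cseq (D j : ℕ) : ℕ :=
  sInf {m : ℕ | 0 < m ∧ j ≤ TD D (m : ℝ)}


-- Auxiliary development
open Finset Real

/-- tuples with entries ≥ 1 and product ≤ N -/
noncomputable def AA (D N : ℕ) : Finset (Fin D → ℕ) :=
  (Fintype.piFinset fun _ => Finset.Icc 1 N).filter (fun f => ∏ k, f k ≤ N)

lemma mem_AA {D N : ℕ} {f : Fin D → ℕ} :
    f ∈ AA D N ↔ (∀ k, 1 ≤ f k ∧ f k ≤ N) ∧ ∏ k, f k ≤ N := by
  simp [AA, Fintype.mem_piFinset, Finset.mem_Icc]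

lemma tauD_eq_card (D n : ℕ) (hn : 1 ≤ n) :
    tauD D n = ((Fintype.piFinset fun _ : Fin D => Finset.Icc 1 n).filter
      (fun f => ∏ k, f k = n)).card := by
  rw [tauD, ← Nat.card_eq_finsetCard]
  apply Nat.card_congr
  refine ⟨fun f => ⟨fun k => (f.1 k : ℕ), ?_⟩, fun g => ⟨fun k => ⟨g.1 k, ?_⟩, ?_⟩, ?_, ?_⟩
  · have hf := f.2
    simp only [Finset.mem_filter, Fintype.mem_piFinset, Finset.mem_Icc]
    refine ⟨fun k => ⟨(f.1 k).one_le, ?_⟩, hf⟩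
    · exact Nat.le_of_dvd hn ((Finset.dvd_prod_of_mem _ (Finset.mem_univ k)).trans hf.dvd)
  · have hg := g.2
    simp only [Finset.mem_filter, Fintype.mem_piFinset, Finset.mem_Icc] at hg
    exact (hg.1 k).1
  · have hg := g.2
    simp only [Finset.mem_filter, Fintype.mem_piFinset, Finset.mem_Icc] at hg
    simpa using hg.2
  · intro f; ext k; rfl
  · intro g; simp

lemma TD_nat (D N : ℕ) : TD D (N : ℝ) = ∑ n ∈ Finset.Icc 1 N, tauD D n := by
  simp [TD]

lemma TD_eq_card_AA (D N : ℕ) : TD D (N : ℝ) = (AA D N).card := by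
  rw [TD_nat]
  rw [Finset.card_eq_sum_card_fiberwise (f := fun f => ∏ k, f k) (t := Finset.Icc 1 N)
    (fun f hf => by
      rcases mem_AA.mp hf with ⟨h1, h2⟩
      exact Finset.mem_Icc.mpr ⟨Finset.one_le_prod' (fun k _ => (h1 k).1), h2⟩)]
  refine Finset.sum_congr rfl (fun n hn => ?_)
  rw [Finset.mem_Icc] at hn
  rw [tauD_eq_card D n hn.1]
  congr 1
  ext f
  simp only [Finset.mem_filter, mem_AA, Fintype.mem_piFinset, Finset.mem_Icc]
  constructor
  · rintro ⟨h1, h2⟩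
    exact ⟨⟨fun k => ⟨(h1 k).1, le_trans (h1 k).2 hn.2⟩, h2 ▸ hn.2⟩, h2⟩
  · rintro ⟨⟨h1, h2⟩, h3⟩
    refine ⟨fun k => ⟨(h1 k).1, ?_⟩, h3⟩
    exact Nat.le_of_dvd hn.1 (by rw [← h3]; exact Finset.dvd_prod_of_mem _ (Finset.mem_univ k))

lemma card_AA_one (N : ℕ) : (AA 1 N).card = N := by
  have h : AA 1 N = Fintype.piFinset (fun _ : Fin 1 => Finset.Icc 1 N) := by
    rw [AA, Finset.filter_true_of_mem]
    intro f hf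
    rw [Fintype.mem_piFinset] at hf
    calc ∏ k, f k = f 0 := by rw [Fin.prod_univ_one]
      _ ≤ N := (Finset.mem_Icc.mp (hf 0)).2
  rw [h, Fintype.card_piFinset]
  simp

lemma card_AA_succ (d N : ℕ) :
    (AA (d + 1) N).card = ∑ a ∈ Finset.Icc 1 N, (AA d (N / a)).card := by
  rw [Finset.card_eq_sum_card_fiberwise (f := fun f => f 0) (t := Finset.Icc 1 N)
    (fun f hf => by
      rcases mem_AA.mp hf with ⟨h1, h2⟩
      exact Finset.mem_Icc.mpr ⟨(h1 0).1, (h1 0).2⟩)]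
  refine Finset.sum_congr rfl (fun a ha => ?_)
  rw [Finset.mem_Icc] at ha
  apply Finset.card_bij (i := fun f _ => Fin.tail f)
  · intro f hf
    simp only [Finset.mem_filter] at hf
    rcases mem_AA.mp hf.1 with ⟨h1, h2⟩
    have h0 : f 0 = a := hf.2
    have hprod : f 0 * ∏ k, Fin.tail f k ≤ N := by
      rw [← Fin.prod_cons (f 0) (Fin.tail f), Fin.cons_self_tail]; exact h2
    rw [h0] at hprod
    have hpos : 0 < a := ha.1
    have hppos : 0 < ∏ k, Fin.tail f k := Finset.prod_pos fun k _ => (h1 k.succ).1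
    have htail_le : ∏ k, Fin.tail f k ≤ N / a :=
      Nat.le_div_iff_mul_le hpos |>.mpr (by rw [mul_comm]; exact hprod)
    refine mem_AA.mpr ⟨fun k => ⟨(h1 k.succ).1, ?_⟩, htail_le⟩
    · exact le_trans (Nat.le_of_dvd hppos
        (Finset.dvd_prod_of_mem _ (Finset.mem_univ k))) htail_le
  · intro f hf g hg hfg
    simp only [Finset.mem_filter] at hf hg
    funext k
    rcases Fin.eq_zero_or_eq_succ k with rfl | ⟨i, rfl⟩
    · rw [hf.2, hg.2]
    · exact congrFun hfg i
  · intro g hg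
    rcases mem_AA.mp hg with ⟨h1, h2⟩
    refine ⟨Fin.cons a g, Finset.mem_filter.mpr ⟨mem_AA.mpr ⟨?_, ?_⟩, by simp⟩, ?_⟩
    · intro k
      rcases Fin.eq_zero_or_eq_succ k with rfl | ⟨i, rfl⟩
      · simpa using ha
      · rw [Fin.cons_succ]
        exact ⟨(h1 i).1, le_trans (h1 i).2 (Nat.div_le_self N a)⟩
    · rw [Fin.prod_cons]
      calc a * ∏ k, g k ≤ a * (N / a) := by
            exact Nat.mul_le_mul_left a h2
        _ ≤ N := Nat.mul_div_le N a
    · exact Fin.tail_cons (α := fun _ => ℕ) a g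

lemma sum_inv_Icc_le (N : ℕ) (hN : 1 ≤ N) :
    ∑ a ∈ Finset.Icc 1 N, ((a : ℝ))⁻¹ ≤ 1 + Real.log N := by
  have h1 : (harmonic N : ℝ) = ∑ a ∈ Finset.Icc 1 N, ((a : ℝ))⁻¹ := by
    rw [harmonic_eq_sum_Icc]; push_cast; rfl
  rw [← h1]; exact harmonic_le_one_add_log N

lemma log_succ_le_sum_inv_Icc (N : ℕ) :
    Real.log (N + 1) ≤ ∑ a ∈ Finset.Icc 1 N, ((a : ℝ))⁻¹ := by
  have h1 : (harmonic N : ℝ) = ∑ a ∈ Finset.Icc 1 N, ((a : ℝ))⁻¹ := by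
    rw [harmonic_eq_sum_Icc]; push_cast; rfl
  rw [← h1]
  have := log_add_one_le_harmonic N
  push_cast at this ⊢
  exact this

lemma card_AA_le (k : ℕ) : ∀ N : ℕ, 1 ≤ N →
    ((AA (k + 1) N).card : ℝ) ≤ N * (1 + Real.log N) ^ k := by
  induction k with
  | zero => intro N hN; rw [card_AA_one]; simp
  | succ k ih =>
    intro N hN
    have hlogN : 0 ≤ Real.log N := Real.log_nonneg (by exact_mod_cast hN)
    rw [card_AA_succ]
    push_cast
    have hterm : ∀ a ∈ Finset.Icc 1 N,
        ((AA (k + 1) (N / a)).card : ℝ) ≤ ((N : ℝ) / a) * (1 + Real.log N) ^ k := by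
      intro a ha
      rw [Finset.mem_Icc] at ha
      have hdiv1 : 1 ≤ N / a := (Nat.one_le_div_iff ha.1).mpr ha.2
      have hlog : 1 + Real.log (N / a : ℕ) ≤ 1 + Real.log N := by
        have : ((N / a : ℕ) : ℝ) ≤ (N : ℝ) := by exact_mod_cast Nat.div_le_self N a
        exact add_le_add (le_refl 1) (Real.log_le_log (by exact_mod_cast hdiv1) this)
      calc ((AA (k + 1) (N / a)).card : ℝ)
          ≤ ((N / a : ℕ) : ℝ) * (1 + Real.log (N / a : ℕ)) ^ k := ih _ hdiv1
        _ ≤ ((N : ℝ) / a) * (1 + Real.log N) ^ k := by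
            apply mul_le_mul Nat.cast_div_le
              (pow_le_pow_left₀ (by positivity ) hlog k) (by positivity) (by positivity)
    calc ∑ a ∈ Finset.Icc 1 N, ((AA (k + 1) (N / a)).card : ℝ)
        ≤ ∑ a ∈ Finset.Icc 1 N, ((N : ℝ) / a) * (1 + Real.log N) ^ k :=
          Finset.sum_le_sum hterm
      _ = (N : ℝ) * (1 + Real.log N) ^ k * ∑ a ∈ Finset.Icc 1 N, ((a : ℝ))⁻¹ := by
          rw [Finset.mul_sum]; exact Finset.sum_congr rfl fun a _ => by ring
      _ ≤ (N : ℝ) * (1 + Real.log N) ^ k * (1 + Real.log N) := by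
          apply mul_le_mul_of_nonneg_left (sum_inv_Icc_le N hN) (by positivity)
      _ = N * (1 + Real.log N) ^ (k + 1) := by ring

set_option maxHeartbeats 1000000 in
/-- key combinatorial lower bound -/
lemma sum_div_le_card_AA (d N M : ℕ) (hd : 1 ≤ d) (hM : 1 ≤ M) (hMN : M ^ d ≤ N) :
    ∑ g ∈ Fintype.piFinset (fun _ : Fin d => Finset.Icc 1 M), (N / ∏ k, g k) ≤
      (AA (d + 1) N).card := by
  set G := Fintype.piFinset (fun _ : Fin d => Finset.Icc 1 M) with hG
  have hgfacts : ∀ g ∈ G, (1 ≤ ∏ k, g k ∧ ∏ k, g k ≤ N) ∧ ∀ k, 1 ≤ g k ∧ g k ≤ N := by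
    intro g hg
    rw [hG, Fintype.mem_piFinset] at hg
    have h1 : ∀ k, 1 ≤ g k ∧ g k ≤ M := fun k => Finset.mem_Icc.mp (hg k)
    have hp1 : 1 ≤ ∏ k, g k := Finset.one_le_prod' fun k _ => (h1 k).1
    have hpN : ∏ k, g k ≤ N := le_trans
      (Finset.prod_le_pow_card _ _ M (fun k _ => (h1 k).2))
      (by simpa [Finset.card_univ] using hMN)
    exact ⟨⟨hp1, hpN⟩, fun k => ⟨(h1 k).1,
      le_trans (h1 k).2 (le_trans (Nat.le_self_pow (by omega) M) hMN)⟩⟩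
  have hsub : (G.biUnion fun g => (Finset.Icc 1 (N / ∏ k, g k)).image
      (fun a => (Fin.cons a g : Fin (d+1) → ℕ))) ⊆ AA (d + 1) N := by
    intro f hf
    rw [Finset.mem_biUnion] at hf
    obtain ⟨g, hg, hf⟩ := hf
    rw [Finset.mem_image] at hf
    obtain ⟨a, ha, rfl⟩ := hf
    rw [Finset.mem_Icc] at ha
    obtain ⟨⟨hp1, hpN⟩, hk⟩ := hgfacts g hg
    have hprod : a * ∏ k, g k ≤ N :=
      le_trans (Nat.mul_le_mul_right _ ha.2) (Nat.div_mul_le_self N _)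
    refine mem_AA.mpr ⟨?_, ?_⟩
    · intro k
      rcases Fin.eq_zero_or_eq_succ k with rfl | ⟨i, rfl⟩
      · simp only [Fin.cons_zero]
        exact ⟨ha.1, le_trans ha.2 (Nat.div_le_self _ _)⟩
      · simp only [Fin.cons_succ]
        exact hk i
    · rw [Fin.prod_cons]; exact hprod
  calc ∑ g ∈ G, (N / ∏ k, g k)
      = ∑ g ∈ G, ((Finset.Icc 1 (N / ∏ k, g k)).image (fun a => (Fin.cons a g : Fin (d+1) → ℕ))).card := by
        refine Finset.sum_congr rfl fun g hg => ?_
        rw [Finset.card_image_of_injective _ (fun a b hab => by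
          simpa using congrFun hab 0), Nat.card_Icc]
        exact (Nat.add_sub_cancel _ _).symm
    _ = (G.biUnion fun g => (Finset.Icc 1 (N / ∏ k, g k)).image (fun a => (Fin.cons a g : Fin (d+1) → ℕ))).card := by
        rw [Finset.card_biUnion]
        intro g hg g' hg' hne
        simp only [Function.onFun]
        rw [Finset.disjoint_left]
        intro f hf hf'
        rw [Finset.mem_image] at hf hf'
        obtain ⟨a, _, rfl⟩ := hf
        obtain ⟨a', _, heq⟩ := hf'
        apply hne
        have := congrArg Fin.tail heq
        rw [Fin.tail_cons, Fin.tail_cons] at this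
        exact this.symm
    _ ≤ (AA (d + 1) N).card := Finset.card_le_card hsub


lemma nat_div_ge_half (P N : ℕ) (hP : 1 ≤ P) (hPN : P ≤ N) :
    (N : ℝ) / (2 * P) ≤ ((N / P : ℕ) : ℝ) := by
  have hq : 1 ≤ N / P := (Nat.one_le_div_iff hP).mpr hPN
  have hlt : N < P * (N / P + 1) := Nat.lt_mul_div_succ N hP
  have hlt2 : N < 2 * (N / P) * P := by
    calc N < P * (N / P + 1) := hlt
      _ ≤ P * (N / P + N / P) := by
          apply Nat.mul_le_mul_left
          omega
      _ = 2 * (N / P) * P := by ring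
  have hPpos : (0:ℝ) < (P:ℝ) := by exact_mod_cast hP
  rw [div_le_iff₀ (by positivity)]
  calc (N:ℝ) ≤ 2 * ((N / P : ℕ):ℝ) * P := by exact_mod_cast le_of_lt hlt2
    _ = ((N / P : ℕ):ℝ) * (2 * P) := by ring

lemma card_AA_ge (d N : ℕ) (hd : 1 ≤ d) (hN : 1 ≤ N) :
    (N : ℝ) / 2 * (Real.log N / d) ^ d ≤ ((AA (d + 1) N).card : ℝ) := by
  set M := ⌊(N : ℝ) ^ ((d : ℝ)⁻¹)⌋₊ with hMdef
  have hNpos : (0 : ℝ) < N := by exact_mod_cast hN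
  have hrpow1 : (1 : ℝ) ≤ (N : ℝ) ^ ((d : ℝ)⁻¹) := by
    calc (1 : ℝ) = (1 : ℝ) ^ ((d : ℝ)⁻¹) := (Real.one_rpow _).symm
      _ ≤ (N : ℝ) ^ ((d : ℝ)⁻¹) :=
        Real.rpow_le_rpow zero_le_one (by exact_mod_cast hN) (by positivity)
  have hM1 : 1 ≤ M := Nat.le_floor (by exact_mod_cast hrpow1)
  have hMN : M ^ d ≤ N := by
    have h1 : ((M : ℝ)) ^ d ≤ ((N : ℝ) ^ ((d : ℝ)⁻¹)) ^ d :=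
      pow_le_pow_left₀ (by positivity) (Nat.floor_le (by positivity)) d
    have h2 : ((N : ℝ) ^ ((d : ℝ)⁻¹)) ^ d = N := by
      rw [← Real.rpow_natCast ((N : ℝ) ^ ((d : ℝ)⁻¹)) d, ← Real.rpow_mul (le_of_lt hNpos),
        inv_mul_cancel₀ (by exact_mod_cast (by omega : d ≠ 0) : (d : ℝ) ≠ 0),
        Real.rpow_one]
    have : ((M : ℝ)) ^ d ≤ (N : ℝ) := h2 ▸ h1
    exact_mod_cast this
  have hlogM : Real.log N / d ≤ ∑ a ∈ Finset.Icc 1 M, ((a : ℝ))⁻¹ := by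
    refine le_trans ?_ (log_succ_le_sum_inv_Icc M)
    have h3 : (N : ℝ) ^ ((d : ℝ)⁻¹) ≤ (M : ℝ) + 1 := le_of_lt (Nat.lt_floor_add_one _)
    calc Real.log N / d = Real.log ((N : ℝ) ^ ((d : ℝ)⁻¹)) := by
          rw [Real.log_rpow hNpos]; ring
      _ ≤ Real.log ((M : ℝ) + 1) := Real.log_le_log (by positivity) h3
      _ = Real.log ((M : ℕ) + 1 : ℝ) := by norm_num
  have key := sum_div_le_card_AA d N M hd hM1 hMN
  have hcast : (∑ g ∈ Fintype.piFinset (fun _ : Fin d => Finset.Icc 1 M), ((N / ∏ k, g k : ℕ) : ℝ))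
      ≤ ((AA (d + 1) N).card : ℝ) := by exact_mod_cast key
  refine le_trans ?_ hcast
  have hterm : ∀ g ∈ Fintype.piFinset (fun _ : Fin d => Finset.Icc 1 M),
      (N : ℝ) / 2 * ∏ k, ((g k : ℝ))⁻¹ ≤ ((N / ∏ k, g k : ℕ) : ℝ) := by
    intro g hg
    rw [Fintype.mem_piFinset] at hg
    have h1 : ∀ k, 1 ≤ g k ∧ g k ≤ M := fun k => Finset.mem_Icc.mp (hg k)
    have hp1 : 1 ≤ ∏ k, g k := Finset.one_le_prod' fun k _ => (h1 k).1
    have hpN : ∏ k, g k ≤ N := le_trans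
      (Finset.prod_le_pow_card _ _ M (fun k _ => (h1 k).2))
      (by simpa [Finset.card_univ] using hMN)
    have := nat_div_ge_half (∏ k, g k) N hp1 hpN
    refine le_trans (le_of_eq ?_) this
    have hppos : (0:ℝ) < ∏ k, (g k : ℝ) := by
      apply Finset.prod_pos; intro k _; exact_mod_cast (h1 k).1
    rw [Finset.prod_inv_distrib, ← Nat.cast_prod]
    rw [mul_comm (2:ℝ) _, ← div_div]
    ring
  calc (N : ℝ) / 2 * (Real.log N / d) ^ d
      ≤ (N : ℝ) / 2 * (∑ a ∈ Finset.Icc 1 M, ((a : ℝ))⁻¹) ^ d := by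
        apply mul_le_mul_of_nonneg_left (pow_le_pow_left₀ ?_ hlogM d) (by positivity)
        have : 0 ≤ Real.log N := Real.log_nonneg (by exact_mod_cast hN)
        positivity
    _ = ∑ g ∈ Fintype.piFinset (fun _ : Fin d => Finset.Icc 1 M),
          (N : ℝ) / 2 * ∏ k, ((g k : ℝ))⁻¹ := by
        rw [← Finset.mul_sum]
        congr 1
        rw [← Fin.prod_const d (∑ a ∈ Finset.Icc 1 M, ((a : ℝ))⁻¹)]
        exact Finset.prod_univ_sum _ _
    _ ≤ _ := Finset.sum_le_sum hterm

lemma TD_le (d N : ℕ) (hN : 1 ≤ N) :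
    ((TD (d + 1) (N : ℝ)) : ℝ) ≤ N * (1 + Real.log N) ^ d := by
  rw [TD_eq_card_AA (d + 1) N]
  exact card_AA_le d N hN

lemma TD_ge (d N : ℕ) (hd : 1 ≤ d) (hN : 1 ≤ N) :
    (N : ℝ) / 2 * (Real.log N / d) ^ d ≤ ((TD (d + 1) (N : ℝ)) : ℝ) := by
  rw [TD_eq_card_AA (d + 1) N]
  exact card_AA_ge d N hd hN

lemma tauD_pos (e n : ℕ) (hn : 1 ≤ n) : 1 ≤ tauD (e + 1) n := by
  rw [tauD_eq_card _ _ hn]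
  refine Finset.card_pos.mpr ⟨Fin.cons n (fun _ => 1), Finset.mem_filter.mpr ⟨?_, ?_⟩⟩
  · rw [Fintype.mem_piFinset]
    intro k
    rcases Fin.eq_zero_or_eq_succ k with rfl | ⟨i, rfl⟩
    · simp [Finset.mem_Icc, hn]
    · simp [Finset.mem_Icc, hn]
  · rw [Fin.prod_cons]
    simp

lemma TD_ge_self (e N : ℕ) : N ≤ TD (e + 1) (N : ℝ) := by
  rw [TD_nat]
  calc N = ∑ n ∈ Finset.Icc 1 N, 1 := by simp
    _ ≤ ∑ n ∈ Finset.Icc 1 N, tauD (e + 1) n :=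
      Finset.sum_le_sum fun n hn => tauD_pos e n (Finset.mem_Icc.mp hn).1

lemma TD_one_le (D : ℕ) : TD D ((1 : ℕ) : ℝ) ≤ 1 := by
  rw [TD_nat]
  simp only [Finset.Icc_self, Finset.sum_singleton]
  rw [tauD_eq_card D 1 le_rfl]
  calc ((Fintype.piFinset fun _ : Fin D => Finset.Icc 1 1).filter
      (fun f => ∏ k, f k = 1)).card
      ≤ (Fintype.piFinset fun _ : Fin D => Finset.Icc 1 1).card :=
        Finset.card_filter_le _ _
    _ = 1 := by
        rw [Fintype.card_piFinset]
        simp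

/-- The unravelled sequence of products satisfies `c_j = Θ(j / log^{D−1} j)`. -/
theorem stmt9 (D : ℕ) (hD : 2 ≤ D) :
    ∃ C₁ C₂ : ℝ, 0 < C₁ ∧ 0 < C₂ ∧ ∀ j : ℕ, 2 ≤ j →
      C₁ * (j : ℝ) / (Real.log j) ^ (D - 1) ≤ (cseq D j : ℝ) ∧
      (cseq D j : ℝ) ≤ C₂ * (j : ℝ) / (Real.log j) ^ (D - 1) := by
  obtain ⟨d, rfl⟩ : ∃ d, D = d + 1 := ⟨D - 1, by omega⟩
  have hd : 1 ≤ d := by omega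
  have hdpos : (0:ℝ) < d := by exact_mod_cast hd
  simp only [Nat.add_sub_cancel]
  set K : ℝ := 1 + (Real.log 2)⁻¹ with hK
  have hlog2 : (0:ℝ) < Real.log 2 := Real.log_pos (by norm_num)
  have hKpos : 0 < K := by positivity
  set C₁ : ℝ := (K ^ d)⁻¹ with hC₁
  have hC₁pos : 0 < C₁ := by positivity
  -- basic facts about c j
  have hcfacts : ∀ j : ℕ, 2 ≤ j → 0 < cseq (d+1) j ∧ (j ≤ TD (d+1) (cseq (d+1) j : ℝ))
      ∧ cseq (d+1) j ≤ j ∧ 2 ≤ cseq (d+1) j ∧ TD (d+1) ((cseq (d+1) j - 1 : ℕ) : ℝ) < j := by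
    intro j hj
    have hjS : j ∈ {m : ℕ | 0 < m ∧ j ≤ TD (d+1) (m : ℝ)} :=
      ⟨by omega, TD_ge_self d j⟩
    have hmem : 0 < cseq (d+1) j ∧ j ≤ TD (d+1) (cseq (d+1) j : ℝ) :=
      Nat.sInf_mem (⟨j, hjS⟩ : {m : ℕ | 0 < m ∧ j ≤ TD (d+1) (m : ℝ)}.Nonempty)
    have hle : cseq (d+1) j ≤ j := Nat.sInf_le hjS
    have h2 : 2 ≤ cseq (d+1) j := by
      obtain ⟨hpos, hT⟩ := hmem
      by_contra h
      have h1 : cseq (d+1) j = 1 := by omega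
      rw [h1] at hT
      have h3 := TD_one_le (d+1)
      have h4 : ((1:ℕ):ℝ) = ((1:ℕ):ℝ) := rfl
      push_cast at hT
      push_cast at h3
      omega
    have hlt : TD (d+1) ((cseq (d+1) j - 1 : ℕ) : ℝ) < j := by
      have hnot := Nat.notMem_of_lt_sInf
        (show cseq (d+1) j - 1 < sInf {m : ℕ | 0 < m ∧ j ≤ TD (d+1) (m : ℝ)} by
          change cseq (d+1) j - 1 < cseq (d+1) j; omega)
      simp only [Set.mem_setOf_eq, not_and, not_le] at hnot
      exact hnot (by omega)
    exact ⟨hmem.1, hmem.2, hle, h2, hlt⟩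
  -- lower bound, valid for all j ≥ 2
  have hlower : ∀ j : ℕ, 2 ≤ j →
      C₁ * (j : ℝ) / (Real.log j) ^ d ≤ (cseq (d+1) j : ℝ) := by
    intro j hj
    obtain ⟨hpos, hT, hle, h2, -⟩ := hcfacts j hj
    set c := cseq (d+1) j with hc
    have hj1 : (1:ℝ) ≤ j := by exact_mod_cast (by omega : 1 ≤ j)
    have hlogj : Real.log 2 ≤ Real.log j :=
      Real.log_le_log (by norm_num) (by exact_mod_cast hj)
    have hlogjpos : 0 < Real.log j := lt_of_lt_of_le hlog2 hlogj
    have hcj : (c : ℝ) ≤ j := by exact_mod_cast hle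
    have hc1 : (1:ℝ) ≤ c := by exact_mod_cast (by omega : 1 ≤ c)
    have hTle : ((TD (d+1) (c : ℝ)) : ℝ) ≤ c * (1 + Real.log c) ^ d :=
      TD_le d c (by omega)
    have hlogc : 1 + Real.log c ≤ K * Real.log j := by
      have h1 : Real.log c ≤ Real.log j := Real.log_le_log (by linarith) hcj
      have h2 : 1 ≤ (Real.log 2)⁻¹ * Real.log j := by
        rw [← div_eq_inv_mul, le_div_iff₀ hlog2]
        linarith
      calc 1 + Real.log c ≤ (Real.log 2)⁻¹ * Real.log j + Real.log j := by linarith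
        _ = K * Real.log j := by rw [hK]; ring
    have hpow : (1 + Real.log c) ^ d ≤ (K * Real.log j) ^ d := by
      apply pow_le_pow_left₀ ?_ hlogc
      have : 0 ≤ Real.log c := Real.log_nonneg hc1
      linarith
    have hjle : (j : ℝ) ≤ c * (K ^ d * (Real.log j) ^ d) := by
      have h0 : (j : ℝ) ≤ TD (d+1) (c : ℝ) := by exact_mod_cast hT
      calc (j:ℝ) ≤ ((TD (d+1) (c : ℝ)) : ℝ) := h0
        _ ≤ c * (1 + Real.log c) ^ d := hTle
        _ ≤ c * (K * Real.log j) ^ d := by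
            apply mul_le_mul_of_nonneg_left hpow (by positivity)
        _ = c * (K ^ d * (Real.log j) ^ d) := by rw [mul_pow]
    rw [hC₁, div_le_iff₀ (by positivity)]
    calc (K ^ d)⁻¹ * j ≤ (K ^ d)⁻¹ * (c * (K ^ d * Real.log j ^ d)) :=
          mul_le_mul_of_nonneg_left hjle (by positivity)
      _ = c * Real.log j ^ d * (K ^ d * (K ^ d)⁻¹) := by ring
      _ = c * Real.log j ^ d := by rw [mul_inv_cancel₀ (by positivity), mul_one]
  -- threshold from little-o
  have hlo : (fun x : ℝ => Real.log x ^ (d:ℝ)) =o[Filter.atTop]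
      (fun x : ℝ => x ^ ((1:ℝ)/2)) :=
    isLittleO_log_rpow_rpow_atTop (d:ℝ) (by norm_num)
  have hev : ∀ᶠ x : ℝ in Filter.atTop,
      ‖Real.log x ^ (d:ℝ)‖ ≤ (C₁/2) * ‖x ^ ((1:ℝ)/2)‖ :=
    hlo.def (by positivity)
  obtain ⟨x₀, hx₀⟩ := Filter.eventually_atTop.mp hev
  set J₀ : ℕ := max 3 ⌈x₀⌉₊ with hJ₀
  have hJ₀3 : 3 ≤ J₀ := le_max_left _ _
  have hthresh : ∀ j : ℕ, J₀ ≤ j → (Real.log j) ^ d ≤ (C₁/2) * (j:ℝ) ^ ((1:ℝ)/2) := by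
    intro j hjJ
    have hx : x₀ ≤ (j:ℝ) := by
      have : ⌈x₀⌉₊ ≤ j := le_trans (le_max_right 3 _) hjJ
      exact le_trans (Nat.le_ceil x₀) (by exact_mod_cast this)
    have h := hx₀ (j:ℝ) hx
    have hj1 : (1:ℝ) ≤ j := by
      have : (3:ℕ) ≤ j := le_trans hJ₀3 hjJ
      exact_mod_cast le_trans (by norm_num : (1:ℕ) ≤ 3) this
    have hlogj0 : 0 ≤ Real.log j := Real.log_nonneg hj1
    rw [Real.norm_eq_abs, Real.norm_eq_abs, Real.rpow_natCast] at h
    rw [abs_of_nonneg (by positivity), abs_of_nonneg (by positivity)] at h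
    exact h
  -- C₂
  set C₂ : ℝ := max ((Real.log J₀) ^ d) (4 * (2*d) ^ d) with hC₂
  have hC₂pos : 0 < C₂ := lt_of_lt_of_le (by positivity : (0:ℝ) < 4 * (2*d)^d)
    (le_max_right _ _)
  refine ⟨C₁, C₂, hC₁pos, hC₂pos, fun j hj => ⟨hlower j hj, ?_⟩⟩
  -- upper bound
  obtain ⟨hpos, hT, hle, h2, hlt⟩ := hcfacts j hj
  set c := cseq (d+1) j with hcdef
  have hj1 : (1:ℝ) ≤ j := by exact_mod_cast (by omega : 1 ≤ j)
  have hlogjpos : 0 < Real.log j := Real.log_pos (by exact_mod_cast hj)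
  have hcj : (c : ℝ) ≤ j := by exact_mod_cast hle
  by_cases hcase : j < J₀
  · -- small j
    have hlogJ : (Real.log j) ^ d ≤ C₂ := by
      refine le_trans ?_ (le_max_left _ _)
      apply pow_le_pow_left₀ (le_of_lt hlogjpos)
      apply Real.log_le_log (by positivity)
      exact_mod_cast le_of_lt hcase
    rw [le_div_iff₀ (by positivity)]
    calc (c:ℝ) * Real.log j ^ d ≤ j * C₂ := by
          apply mul_le_mul hcj hlogJ (by positivity) (by positivity)
      _ = C₂ * j := by ring
  · -- large j
    push_neg at hcase
    have hsq := hthresh j hcase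
    set s : ℝ := (j:ℝ) ^ ((1:ℝ)/2) with hs
    have hjpos : (0:ℝ) < j := by linarith
    have hs1 : 1 ≤ s := Real.one_le_rpow hj1 (by norm_num)
    have hss : s * s = j := by
      rw [hs, ← Real.rpow_add hjpos]; norm_num
    have hP : (0:ℝ) < Real.log j ^ d := by positivity
    have hclow := hlower j hj
    rw [div_le_iff₀ hP] at hclow
    have hspos : (0:ℝ) < s := by linarith
    have hc0 : (0:ℝ) ≤ (c:ℝ) := Nat.cast_nonneg _
    have h1 : (c:ℝ) * (Real.log j ^ d) ≤ c * ((C₁/2)*s) := mul_le_mul_of_nonneg_left hsq hc0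
    have key : C₁ * (s*s) ≤ (c:ℝ)*((C₁/2)*s) := by rw [hss]; exact le_trans hclow h1
    have hc2s : 2 * s ≤ (c:ℝ) := by nlinarith [key, mul_pos hC₁pos hspos]
    have hc2R : (2:ℝ) ≤ c := by linarith
    have hcm1cast : ((c - 1 : ℕ) : ℝ) = (c:ℝ) - 1 := by
      rw [Nat.cast_sub (by omega)]
      norm_num
    have hcm1_ge_s : s ≤ (c:ℝ) - 1 := by linarith
    have hcm1_ge_half : (c:ℝ)/2 ≤ (c:ℝ) - 1 := by linarith
    have hcm1_pos : 1 ≤ c - 1 := by omega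
    have hlogcm1 : Real.log j / 2 ≤ Real.log ((c-1:ℕ):ℝ) := by
      rw [hcm1cast]
      calc Real.log j / 2 = Real.log s := by
            rw [hs, Real.log_rpow hjpos]; ring
        _ ≤ Real.log ((c:ℝ) - 1) := Real.log_le_log (by positivity) hcm1_ge_s
    have hTlow := TD_ge d (c-1) hd hcm1_pos
    have hTlt : ((TD (d+1) ((c-1:ℕ):ℝ)) : ℝ) < j := by exact_mod_cast hlt
    have hchain : ((c:ℝ)/2)/2 * ((Real.log j / 2) / d) ^ d < j := by
      calc ((c:ℝ)/2)/2 * ((Real.log j / 2) / d) ^ d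
          ≤ (((c-1:ℕ):ℝ))/2 * ((Real.log ((c-1:ℕ):ℝ)) / d) ^ d := by
            apply mul_le_mul
            · rw [hcm1cast]; linarith
            · apply pow_le_pow_left₀ (by positivity)
              gcongr
            · positivity
            · positivity
        _ ≤ ((TD (d+1) ((c-1:ℕ):ℝ)) : ℝ) := hTlow
        _ < j := hTlt
    -- unfold to the final bound
    rw [le_div_iff₀ (by positivity)]
    have hexp : ((Real.log j / 2) / d) ^ d = Real.log j ^ d / (2*d)^d := by
      rw [div_div, ← div_pow]
    rw [hexp] at hchain
    have h2d : (0:ℝ) < (2*d)^d := by positivity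
    calc (c:ℝ) * Real.log j ^ d = 4 * (2*d)^d * (((c:ℝ)/2)/2 * (Real.log j ^ d / (2*d)^d)) := by
          field_simp
          ring
      _ ≤ 4 * (2*d)^d * j := by
          apply mul_le_mul_of_nonneg_left (le_of_lt hchain) (by positivity)
      _ ≤ C₂ * j := by
          apply mul_le_mul_of_nonneg_right (le_max_right _ _) (by positivity)
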